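/- arXiv:1105.2685 — 5 statements merged into one kernel-verified Lean document; each statement's English description precedes it below -/
import Mathlib

section
/- Let U and V be real vector spaces and let Q : U → V be any mapping. Then Q satisfies 3Q(x−y) + 3Q(y−z) + 3Q(x−z) = Q(y+z−2x) + Q(x+z−2y) + Q(x+y−2z) for all x, y, z ∈ U if and only if Q is quadratic, i.e. Q(x+y) + Q(x−y) = 2Q(x) + 2Q(y) for all x, y ∈ U. -/
/-!
Write `D(a, b) = Q(a + b) + Q(a - b) - 2Q(a) - 2Q(b)`. Putting `z = 0`, the equation forces
`Q 0 = 0`, `Q` even and `Q(2x) = 4Q(x)`, and becomes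
`Q(2u + v) + Q(u - v) + Q(u + 2v) = 3Q(u) + 3Q(v) + 3Q(u + v)`. Its instances at `(a, ±b)` add up
to `D(2a, b) + D(a, 2b) = 2D(a, b)`, and four more instances give the symmetry
`D(2a, b) = D(a, 2b)`; hence `D(2a, b) = D(a, b)` and `D(2a, 2b) = D(a, b)`. But `Q(2x) = 4Q(x)`
gives `D(2a, 2b) = 4D(a, b)`, so `3D = 0`.
-/

section

variable {U V : Type*} [AddCommGroup U] [AddCommGroup V]

def quadDefect (Q : U → V) (a b : U) : V :=
  Q (a + b) + Q (a - b) - 2 • Q a - 2 • Q b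

theorem quadDefect_eq_zero_iff {Q : U → V} {a b : U} :
    quadDefect Q a b = 0 ↔ Q (a + b) + Q (a - b) = 2 • Q a + 2 • Q b := by
  rw [quadDefect, sub_sub, sub_eq_zero]

theorem quadDefect_two_nsmul_two_nsmul {Q : U → V} (hQ : ∀ x, Q (2 • x) = 4 • Q x) (a b : U) :
    quadDefect Q (2 • a) (2 • b) = 4 • quadDefect Q a b := by
  simp only [quadDefect, ← nsmul_add, ← nsmul_sub, hQ]
  module

def ThreePointEq (Q : U → V) : Prop :=
  ∀ x y z : U, 3 • Q (x - y) + 3 • Q (y - z) + 3 • Q (x - z)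
    = Q (y + z - 2 • x) + Q (x + z - 2 • y) + Q (x + y - 2 • z)

theorem threePointEq_of_quadratic {Q : U → V}
    (h : ∀ x y : U, Q (x + y) + Q (x - y) = 2 • Q x + 2 • Q y) : ThreePointEq Q := by
  intro x y z
  have h0 := h 0 0
  have h1 := h (x - z) (x - y)
  have h2 := h (x - z) (y - z)
  have h3 := h (x - y) (y - z)
  have hneg := h 0 (2 • x - y - z)
  abel_nf at *
  linear_combination (norm := module) -h1 - h2 - h3 - hneg + h0

namespace ThreePointEq

variable {Q : U → V}

theorem map_zero [IsAddTorsionFree V] (h : ThreePointEq Q) : Q 0 = 0 := by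
  have h0 := h 0 0 0
  simp only [sub_self, add_zero, smul_zero] at h0
  refine (nsmul_eq_zero_iff_right (n := 6) (by norm_num)).mp ?_
  linear_combination (norm := module) h0

theorem map_neg_add_add (h : ThreePointEq Q) (u v : U) :
    Q (-(2 • u + v)) + Q (u - v) + Q (u + 2 • v) = 3 • Q u + 3 • Q v + 3 • Q (u + v) := by
  have h1 := h (u + v) v 0
  abel_nf at h1 ⊢
  exact h1.symm

theorem map_neg [IsAddTorsionFree V] (h : ThreePointEq Q) (x : U) : Q (-x) = Q x := by
  have h1 := h.map_neg_add_add 0 x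
  have h2 := h.map_neg_add_add (-x) 0
  simp only [smul_zero, zero_add, zero_sub, add_zero, sub_zero, smul_neg, neg_neg, h.map_zero]
    at h1 h2
  rw [← sub_eq_zero]
  refine (nsmul_eq_zero_iff_right (n := 6) (by norm_num)).mp ?_
  linear_combination (norm := module) h1 - h2

theorem map_add_add [IsAddTorsionFree V] (h : ThreePointEq Q) (u v : U) :
    Q (2 • u + v) + Q (u - v) + Q (u + 2 • v) = 3 • Q u + 3 • Q v + 3 • Q (u + v) := by
  rw [← h.map_neg, h.map_neg_add_add]

theorem map_two_nsmul [IsAddTorsionFree V] (h : ThreePointEq Q) (x : U) : Q (2 • x) = 4 • Q x := by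
  have h1 := h.map_add_add x 0
  simp only [add_zero, sub_zero, smul_zero, h.map_zero] at h1
  linear_combination (norm := module) h1

theorem quadDefect_two_nsmul_left_add_right [IsAddTorsionFree V] (h : ThreePointEq Q) (a b : U) :
    quadDefect Q (2 • a) b + quadDefect Q a (2 • b) = 2 • quadDefect Q a b := by
  have h1 := h.map_add_add a b
  have h2 := h.map_add_add a (-b)
  rw [h.map_neg] at h2
  simp only [h.map_two_nsmul, quadDefect]
  abel_nf at h1 h2 ⊢
  linear_combination (norm := module) h1 + h2

theorem quadDefect_two_nsmul_left_eq_right [IsAddTorsionFree V] (h : ThreePointEq Q) (a b : U) :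
    quadDefect Q (2 • a) b = quadDefect Q a (2 • b) := by
  -- the first two instances express `Q (2a ± 3b)` and `Q (a ± 3b)`, the last two eliminate them
  have h1 := h.map_add_add (2 • a + b) (-(2 • b))
  have h2 := h.map_add_add (a + b) (-(2 • b))
  have h3 := h.map_add_add (a + 2 • b) (-b)
  have h4 := h.map_add_add (a - 2 • b) b
  simp only [h.map_neg, h.map_two_nsmul] at h1 h2 h3 h4
  rw [← nsmul_right_inj three_ne_zero]
  simp only [quadDefect, h.map_two_nsmul]
  rw [show (2 • (2 • a + b) + -(2 • b) : U) = 2 • 2 • a by abel, h.map_two_nsmul,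
    h.map_two_nsmul] at h1
  rw [show (2 • (a + b) + -(2 • b) : U) = 2 • a by abel, h.map_two_nsmul] at h2
  abel_nf at h1 h2 h3 h4 ⊢
  linear_combination (norm := module) h3 + h4 - h1 - h2

theorem quadDefect_two_nsmul_left [IsAddTorsionFree V] (h : ThreePointEq Q) (a b : U) :
    quadDefect Q (2 • a) b = quadDefect Q a b := by
  rw [← nsmul_right_inj two_ne_zero, two_nsmul, ← h.quadDefect_two_nsmul_left_add_right,
    h.quadDefect_two_nsmul_left_eq_right]

theorem quadDefect_eq_zero [IsAddTorsionFree V] (h : ThreePointEq Q) (a b : U) :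
    quadDefect Q a b = 0 := by
  have hscale : quadDefect Q (2 • a) (2 • b) = 4 • quadDefect Q a b :=
    quadDefect_two_nsmul_two_nsmul h.map_two_nsmul a b
  have hinv : quadDefect Q (2 • a) (2 • b) = quadDefect Q a b := by
    rw [h.quadDefect_two_nsmul_left, ← h.quadDefect_two_nsmul_left_eq_right,
      h.quadDefect_two_nsmul_left]
  refine (nsmul_eq_zero_iff_right (n := 3) (by norm_num)).mp ?_
  linear_combination (norm := module) hinv - hscale

end ThreePointEq

end

theorem stmt_0_general {U V : Type*} [AddCommGroup U] [AddCommGroup V] [Module ℝ V]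
    (Q : U → V) :
    (∀ x y z : U,
      (3 : ℕ) • Q (x - y) + (3 : ℕ) • Q (y - z) + (3 : ℕ) • Q (x - z)
        = Q (y + z - (2 : ℕ) • x) + Q (x + z - (2 : ℕ) • y) + Q (x + y - (2 : ℕ) • z)) ↔
    (∀ x y : U, Q (x + y) + Q (x - y) = (2 : ℕ) • Q x + (2 : ℕ) • Q y) := by
  have : IsAddTorsionFree V := .of_isTorsionFree ℝ V
  exact ⟨fun h a b => quadDefect_eq_zero_iff.mp (ThreePointEq.quadDefect_eq_zero h a b),
    threePointEq_of_quadratic⟩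

/-- A mapping `Q` between real vector spaces satisfies
`3Q(x−y) + 3Q(y−z) + 3Q(x−z) = Q(y+z−2x) + Q(x+z−2y) + Q(x+y−2z)` for all `x y z`
iff `Q` is quadratic. -/
theorem stmt_0 {U V : Type*} [AddCommGroup U] [Module ℝ U] [AddCommGroup V] [Module ℝ V]
    (Q : U → V) :
    (∀ x y z : U,
      (3 : ℕ) • Q (x - y) + (3 : ℕ) • Q (y - z) + (3 : ℕ) • Q (x - z)
        = Q (y + z - (2 : ℕ) • x) + Q (x + z - (2 : ℕ) • y) + Q (x + y - (2 : ℕ) • z)) ↔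
    (∀ x y : U, Q (x + y) + Q (x - y) = (2 : ℕ) • Q x + (2 : ℕ) • Q y) :=
  stmt_0_general Q
end

section
/- Let n ≥ 3 be an integer, let U and V be real vector spaces, and suppose Q : U → V satisfies equation (E_n). Then Q is even, i.e. Q(−x) = Q(x) for all x ∈ U, and Q((n−1)^k · x) = (n−1)^{2k} · Q(x) for every x ∈ U and every natural number k. -/
/-!
Evaluating (E_n) at `(a, b, 0, …, 0)` gives an identity whose right-hand side is symmetric in
`a` and `b`, while its left-hand side contains `n • Q (a - b)`; cancelling `n` gives
`Q (a - b) = Q (b - a)`, hence evenness. At `a = b = 0` the same identity forces `Q 0 = 0`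
once `n ≥ 3`, and at `b = 0` evenness turns it into `Q ((n - 1) • x) = (n - 1) ^ 2 • Q x`,
which iterates to the powers of `n - 1`.
-/

/-- Equation (E_n): `n·∑_{1≤i<j≤n} Q(x_i − x_j) = ∑_{i=1}^{n} Q((∑_{j=1}^{n} x_j) − n·x_i)`. -/
def SatisfiesEn {U V : Type*} [AddCommGroup U] [AddCommGroup V] (n : ℕ) (Q : U → V) : Prop :=
  ∀ x : Fin n → U,
    n • ∑ p ∈ Finset.univ.filter (fun p : Fin n × Fin n => p.1 < p.2), Q (x p.1 - x p.2)
      = ∑ i : Fin n, Q ((∑ j : Fin n, x j) - n • x i)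

theorem Fintype.sum_sum_ite_lt_const {ι V : Type*} [Fintype ι] [LinearOrder ι] [AddCommMonoid V]
    (c : V) : ∑ i : ι, ∑ j : ι, (if i < j then c else 0) = (Fintype.card ι).choose 2 • c := by
  rw [← Fintype.sum_prod_type' (fun i j => if i < j then c else 0), ← Finset.sum_filter,
    Finset.sum_const, ← Finset.univ_product_univ, Finset.card_product_filter_lt,
    Finset.card_univ]

theorem map_pow_nsmul_of_map_nsmul {U V : Type*} [AddMonoid U] [AddMonoid V] {Q : U → V} {c : ℕ}
    (h : ∀ x, Q (c • x) = c ^ 2 • Q x) (x : U) (k : ℕ) : Q (c ^ k • x) = c ^ (2 * k) • Q x := by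
  induction k with
  | zero => simp
  | succ k ih => rw [pow_succ, mul_nsmul, h, ih, smul_smul, ← pow_add, mul_add_one, add_comm]

namespace SatisfiesEn

variable {U V : Type*} [AddCommGroup U] [AddCommGroup V] {n : ℕ} {Q : U → V}

theorem two_point (hQ : SatisfiesEn n Q) (hn : 2 ≤ n) (a b : U) :
    n • (Q (a - b) + (n - 2) • (Q a + Q b) + (n - 2).choose 2 • Q 0) =
      Q (a + b - n • a) + Q (a + b - n • b) + (n - 2) • Q (a + b) := by
  obtain ⟨m, rfl⟩ := Nat.exists_eq_add_of_le' hn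
  have h := hQ (Fin.cons a (Fin.cons b 0))
  rw [Finset.sum_filter, Fintype.sum_prod_type] at h
  simp only [Fin.sum_univ_succ, not_lt_zero, ↓reduceIte, Fin.cons_succ, Fin.succ_zero_eq_one,
    Fin.lt_one_iff, Fin.cons_zero, Pi.zero_apply, sub_zero, zero_add, Fin.succ_pos,
    Finset.sum_const, Finset.card_univ, Fintype.card_fin, Fin.succ_ne_zero,
    Fin.succ_lt_succ_iff, Fintype.sum_sum_ite_lt_const, smul_add,
    add_zero, nsmul_zero] at h
  rw [Nat.add_sub_cancel]
  linear_combination (norm := module) h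

variable [IsAddTorsionFree V]

theorem map_sub_comm (hQ : SatisfiesEn n Q) (hn : 2 ≤ n) (a b : U) : Q (a - b) = Q (b - a) := by
  have h := hQ.two_point hn a b
  have h' := hQ.two_point hn b a
  rw [add_comm b a, add_comm (Q b), add_comm (Q (a + b - n • b))] at h'
  rwa [← h', nsmul_right_inj (by omega), add_left_inj, add_left_inj] at h

theorem map_neg (hQ : SatisfiesEn n Q) (hn : 2 ≤ n) (x : U) : Q (-x) = Q x := by
  simpa using hQ.map_sub_comm hn 0 x

theorem map_zero (hQ : SatisfiesEn n Q) (hn : 3 ≤ n) : Q 0 = 0 := by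
  have h := hQ.two_point (by omega) 0 0
  rw [sub_self, add_zero, smul_zero, sub_zero, ← two_nsmul, ← add_nsmul,
    Nat.add_sub_cancel' (by omega), nsmul_right_inj (by omega), add_assoc, add_eq_left] at h
  have h0 : (2 * (n - 2) + (n - 2).choose 2) • Q 0 = 0 := by
    rw [← h]
    module
  exact (smul_eq_zero.mp h0).resolve_left (by omega)

theorem map_nsmul_pred (hQ : SatisfiesEn n Q) (hn : 3 ≤ n) (x : U) :
    Q ((n - 1) • x) = (n - 1) ^ 2 • Q x := by
  have h := hQ.two_point (by omega) x 0
  obtain ⟨m, rfl⟩ : ∃ m, n = m + 2 := ⟨n - 2, by omega⟩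
  simp only [Nat.add_sub_cancel, add_zero, sub_zero, smul_zero, hQ.map_zero hn] at h
  rw [show x - (m + 2) • x = -((m + 1) • x) by module, hQ.map_neg (by omega)] at h
  rw [show m + 2 - 1 = m + 1 by omega]
  linear_combination (norm := module) h.symm

end SatisfiesEn

theorem stmt_1_general {U V : Type*} [AddCommGroup U] [AddCommGroup V] [Module ℝ V]
    (n : ℕ) (hn : 3 ≤ n) (Q : U → V) (hQ : SatisfiesEn n Q) :
    (∀ x : U, Q (-x) = Q x) ∧
    (∀ (x : U) (k : ℕ), Q (((n - 1) ^ k : ℕ) • x) = ((n - 1) ^ (2 * k) : ℕ) • Q x) := by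
  have : IsAddTorsionFree V := .of_isTorsionFree ℝ V
  exact ⟨hQ.map_neg (by omega), map_pow_nsmul_of_map_nsmul (hQ.map_nsmul_pred hn)⟩

/-- If `Q` between real vector spaces satisfies equation (E_n) for
an integer `n ≥ 3`, then `Q` is even and `Q((n−1)^k·x) = (n−1)^{2k}·Q(x)`. -/
theorem stmt_1 {U V : Type*} [AddCommGroup U] [Module ℝ U] [AddCommGroup V] [Module ℝ V]
    (n : ℕ) (hn : 3 ≤ n) (Q : U → V) (hQ : SatisfiesEn n Q) :
    (∀ x : U, Q (-x) = Q x) ∧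
    (∀ (x : U) (k : ℕ), Q (((n - 1) ^ k : ℕ) • x) = ((n - 1) ^ (2 * k) : ℕ) • Q x) :=
  stmt_1_general n hn Q hQ
end

section
/- Let U and V be real vector spaces and let a be an integer with |a| ≠ 1. A mapping Q : U → V satisfies Q(ax+y) + Q(x+ay) + (a−1)Q(x−y) = (a+1)Q(x+y) + (a²−1)(Q(x) + Q(y)) for all x, y ∈ U if and only if Q is quadratic, i.e. Q(x+y) + Q(x−y) = 2Q(x) + 2Q(y) for all x, y ∈ U. -/
/-!
On the forward side, the special values `(0, 0)`, `(x, 0)` and `(0, x)` give `Q 0 = 0`, `Q` even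
and `Q (a • x) = a ^ 2 • Q x`. Everything else is elimination: restricted to a line, a
combination of finitely many instances of the equation, with coefficients polynomial in `a`,
gives `(a ^ 2 - 1) ^ 2 • (Q (2 • x) - 4 • Q x) = 0`, hence homogeneity also for `2` and `a ± 1`;
restricted to the plane spanned by `x` and `y`, another combination gives `(a ^ 2 - 1) ^ 3` times
the parallelogram defect. The coefficients were found by Gaussian elimination over `ℚ(a)`, and
`|a| ≠ 1` is exactly what is needed to cancel the power of `a ^ 2 - 1`.

Conversely, the parallelogram law makes `u ↦ Q (u + w) - Q (u - w)` additive, hence `ℤ`-linear,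
which gives `Q (n • x) = n ^ 2 • Q x` and, after expansion, the equation for every integer `a`.
-/

section

variable {U V : Type*} [AddCommGroup U] [AddCommGroup V] [Module ℝ V]

def ParallelogramLaw (Q : U → V) : Prop :=
  ∀ x y : U, Q (x + y) + Q (x - y) = (2 : ℝ) • Q x + (2 : ℝ) • Q y

namespace ParallelogramLaw

variable {Q : U → V}

theorem map_zero (h : ParallelogramLaw Q) : Q 0 = 0 := by
  have h00 := h 0 0
  simp only [add_zero, sub_zero] at h00
  have : (2 : ℝ) • Q 0 = 0 := by linear_combination (norm := module) -h00
  exact (smul_eq_zero.1 this).resolve_left two_ne_zero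

theorem map_neg (h : ParallelogramLaw Q) (z : U) : Q (-z) = Q z := by
  have h0z := h 0 z
  simp only [zero_add, zero_sub, h.map_zero, smul_zero] at h0z
  linear_combination (norm := module) h0z

theorem map_add_self (h : ParallelogramLaw Q) (z : U) : Q (z + z) = (4 : ℝ) • Q z := by
  have hzz := h z z
  rw [sub_self, h.map_zero] at hzz
  linear_combination (norm := module) hzz

theorem map_add_sub_map_sub_add (h : ParallelogramLaw Q) (w u v : U) :
    Q (u + v + w) - Q (u + v - w) = (Q (u + w) - Q (u - w)) + (Q (v + w) - Q (v - w)) := by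
  have h₁ := h (u + w) v
  have h₂ := h (u - w) v
  have h₃ := h (v + w) u
  have h₄ := h (v - w) u
  rw [show u + w + v = u + v + w by abel, show u + w - v = u - v + w by abel] at h₁
  rw [show u - w + v = u + v - w by abel, show u - w - v = u - v - w by abel] at h₂
  rw [show v + w + u = u + v + w by abel, show v + w - u = -(u - v - w) by abel,
    h.map_neg] at h₃
  rw [show v - w + u = u + v - w by abel, show v - w - u = -(u - v + w) by abel,
    h.map_neg] at h₄
  linear_combination (norm := module) (1 / 2 : ℝ) • (h₁ - h₂ + h₃ - h₄)

theorem map_zsmul_add_sub (h : ParallelogramLaw Q) (n : ℤ) (z w : U) :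
    Q (n • z + w) - Q (n • z - w) = n • (Q (z + w) - Q (z - w)) :=
  map_zsmul (AddMonoidHom.mk' (fun u => Q (u + w) - Q (u - w))
    (h.map_add_sub_map_sub_add w)) n z

theorem map_zsmul (h : ParallelogramLaw Q) (n : ℤ) (z : U) :
    Q (n • z) = (n : ℝ) ^ 2 • Q z := by
  have h₁ := h.map_zsmul_add_sub n z (n • z)
  have h₂ := h.map_zsmul_add_sub n z z
  rw [sub_self, h.map_zero, h.map_add_self, add_comm z,
    show z - n • z = -(n • z - z) by abel, h.map_neg] at h₁
  rw [sub_self, h.map_zero, h.map_add_self] at h₂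
  have : (4 : ℝ) • Q (n • z) = (4 : ℝ) • ((n : ℝ) ^ 2 • Q z) := by
    linear_combination (norm := module) h₁ + n • h₂
  exact smul_right_injective V four_ne_zero this

end ParallelogramLaw

variable [Module ℝ U]

def QuadFunEq (a : ℝ) (Q : U → V) : Prop :=
  ∀ x y : U, Q (a • x + y) + Q (x + a • y) + (a - 1) • Q (x - y) =
    (a + 1) • Q (x + y) + (a ^ 2 - 1) • (Q x + Q y)

theorem ParallelogramLaw.quadFunEq {Q : U → V} (h : ParallelogramLaw Q) (a : ℤ) :
    QuadFunEq (a : ℝ) Q := by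
  intro x y
  have h₁ := h (a • x) y
  have h₂ := h x (a • y)
  have h₃ := h.map_zsmul_add_sub a x y
  have h₄ := h.map_zsmul_add_sub a y x
  rw [add_comm _ x, show a • y - x = -(x - a • y) by abel, h.map_neg,
    add_comm y, show y - x = -(x - y) by abel, h.map_neg] at h₄
  simp only [Int.cast_smul_eq_zsmul]
  linear_combination (norm := module) (1 / 2 : ℝ) • (h₁ + h₂ + h₃ + h₄) +
    h.map_zsmul a x + h.map_zsmul a y - h x y

namespace QuadFunEq

variable {a : ℝ} {Q : U → V}

theorem comp {W : Type*} [AddCommGroup W] [Module ℝ W] (h : QuadFunEq a Q) (g : W →ₗ[ℝ] U) :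
    QuadFunEq a (Q ∘ g) := fun x y => by
  simpa only [Function.comp_apply, map_add, map_sub, map_smul] using h (g x) (g y)

theorem map_zero (h : QuadFunEq a Q) (ha : a ^ 2 ≠ 1) : Q 0 = 0 := by
  have h00 := h 0 0
  simp only [smul_zero, add_zero, sub_zero] at h00
  have : (2 * (a ^ 2 - 1)) • Q 0 = 0 := by linear_combination (norm := module) -h00
  exact (smul_eq_zero.1 this).resolve_left (mul_ne_zero two_ne_zero (sub_ne_zero.2 ha))

theorem map_neg (h : QuadFunEq a Q) (ha : a ≠ 1) (z : U) : Q (-z) = Q z := by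
  have hz0 := h z 0
  have h0z := h 0 z
  simp only [smul_zero, add_zero, zero_add, sub_zero, zero_sub] at hz0 h0z
  have : (a - 1) • (Q (-z) - Q z) = 0 := by linear_combination (norm := module) h0z - hz0
  exact sub_eq_zero.1 ((smul_eq_zero.1 this).resolve_left (sub_ne_zero.2 ha))

theorem map_smul_self (h : QuadFunEq a Q) (ha : a ^ 2 ≠ 1) (z : U) :
    Q (a • z) = a ^ 2 • Q z := by
  have hz0 := h z 0
  simp only [smul_zero, add_zero, sub_zero, h.map_zero ha] at hz0
  linear_combination (norm := module) hz0

theorem line_apply_two {f : ℝ → V} (h : QuadFunEq a f) (ha : a ^ 2 ≠ 1) :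
    f 2 = (4 : ℝ) • f 1 := by
  have ha₁ := (sq_ne_one_iff.1 ha).1
  refine smul_right_injective V (pow_ne_zero 2 (sub_ne_zero.2 ha)) ?_
  dsimp only
  linear_combination (norm := skip)
      (a ^ 7 / 6 + 5 * a ^ 6 / 6 + a ^ 5 / 6 - 13 * a ^ 4 / 3 + 5 * a ^ 3 / 6 + 25 * a ^ 2 / 6
        - 23 * a / 6 - 2) •
        h.map_neg ha₁ (-1) +
      (-a ^ 6 / 4 - a ^ 5 / 12 + a ^ 4 / 2 - 5 * a ^ 3 / 6 + a ^ 2 / 12 - 5 * a / 12 + 1) •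
        h.map_neg ha₁ (-2) +
      (-a ^ 5 / 6 - 5 * a ^ 4 / 6 + a ^ 3 / 3 + 10 * a ^ 2 / 3 + 11 * a / 6 - 1 / 2) •
        h.map_neg ha₁ (-a) +
      (-a ^ 5 / 3 - 5 * a ^ 4 / 6 - a ^ 3 / 2 + 13 * a ^ 2 / 6 - a / 2 - 2) •
        h.map_smul_self ha (-1) +
      (-a ^ 3 / 6 - a ^ 2 / 2 - 5 * a / 6 - 1 / 2) • h a (-a + 1) +
      (-a ^ 5 / 3 - a ^ 4 / 3 - a ^ 3 - a ^ 2 / 2 + 4 * a / 3 + 3 / 2) • h.map_neg ha₁ (a - 1) +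
      (a ^ 3 / 6 + a ^ 2 / 2 + 5 * a / 6 + 1 / 2) • h.map_neg ha₁ (a ^ 2 - 2 * a) +
      (a ^ 3 / 6 + a ^ 2 / 2 + 5 * a / 6 + 1 / 2) • h.map_smul_self ha (a - 2) +
      (a ^ 4 / 3 + a ^ 3 / 6 + a ^ 2 / 6 + 5 * a / 6 + 1 / 2) • h 1 (-2) +
      (-a ^ 4 / 3 - a ^ 3 / 6 - a ^ 2 / 6 - 5 * a / 6 - 1 / 2) • h.map_neg ha₁ (2 * a - 1) +
      (a ^ 3 / 6 + a ^ 2 / 2 + 5 * a / 6 + 1 / 2) • h 1 (a - 1) +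
      (-a ^ 4 / 6 - a ^ 3 / 3 - a ^ 2 / 3 + a / 3 + 1 / 2) • h.map_neg ha₁ (a - 2) +
      (a ^ 4 / 6 - 2 * a ^ 2 / 3 + 1 / 2) • h 1 1 +
      (-a ^ 4 / 6 + 5 * a ^ 2 / 3 - 3 / 2) • h.map_neg ha₁ (-a - 1) +
      (a ^ 3 / 6 - a ^ 2 / 6 + a / 2 + 3 / 2) • h a (a - 1) +
      (-a ^ 3 / 6 + a ^ 2 / 6 - a / 2 - 3 / 2) • h.map_neg ha₁ (-a ^ 2) +
      (-a ^ 3 / 6 + a ^ 2 / 6 - a / 2 - 3 / 2) • h.map_smul_self ha (-a) +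
      (-a ^ 3 / 6 + a ^ 2 / 6 - a / 2 - 3 / 2) • h 1 (-a - 1) +
      (a ^ 3 / 6 - a ^ 2 / 6 + a / 2 + 3 / 2) • h.map_neg ha₁ (a ^ 2 + a - 1) +
      (a ^ 5 / 6 + a ^ 3 / 3 + 7 * a ^ 2 / 6 - a / 2 - 1 / 2) • h 1 (-1) +
      (-a ^ 2 / 3 + a / 3) • h a (a + 1) +
      (a ^ 2 / 3 - a / 3) • h.map_neg ha₁ (-a ^ 2 - 2 * a) +
      (a ^ 2 / 3 - a / 3) • h.map_smul_self ha (-a - 2) +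
      (a ^ 2 / 3 - a / 3) • h 1 (a + 1) +
      (-a ^ 4 / 3 + a ^ 3 / 3) • h.map_neg ha₁ (-a - 2) +
      (a ^ 4 / 6 - a ^ 3 / 3 + 2 * a / 3 - 1 / 2) • h 1 2 +
      (-a ^ 2 / 6 - 1 / 2) • h a (a + 2) +
      (-a ^ 2 / 6 - 1 / 2) • h.map_neg ha₁ (a ^ 2 + 3 * a) +
      (a ^ 2 / 6 + 1 / 2) • h.map_smul_self ha (-a - 3) +
      (a ^ 2 / 6 + 1 / 2) • h 2 (a + 1) +
      (-a ^ 4 / 6 - a ^ 2 / 2) • h.map_neg ha₁ (-a - 3) +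
      (-a ^ 4 / 12 - a ^ 3 / 12 - a ^ 2 / 4 - a / 4) • h 2 2 +
      (a ^ 3 / 6 + a / 2) • h 1 3 +
      (a ^ 2 / 6 + 1 / 2) • h a (2 * a + 1) +
      (a ^ 2 / 6 + 1 / 2) • h.map_neg ha₁ (2 * a ^ 2 + 2 * a) +
      (-a ^ 2 / 6 - 1 / 2) • h.map_smul_self ha (-2 * a - 2) +
      (-a ^ 2 / 6 - 1 / 2) • h 1 (a + 2) +
      (a ^ 4 / 6 + a ^ 2 / 2) • h.map_neg ha₁ (-2 * a - 2) +
      (-a ^ 3 / 6 - a / 2) • h a (a - 2) +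
      (a ^ 3 / 6 + a / 2) • h.map_smul_self ha (a - 1) +
      (-a ^ 4 / 12 - a ^ 3 / 12 - a ^ 2 / 4 - a / 4) • h 2 (-2) +
      (a ^ 4 / 12 + a ^ 3 / 12 + a ^ 2 / 4 + a / 4) • h.map_neg ha₁ (2 * a - 2) +
      (a ^ 3 / 6 + a / 2) • h 2 (-a - 1) +
      (-a ^ 3 / 6 - a / 2) • h.map_neg ha₁ (a ^ 2 + a - 2) +
      (a ^ 6 / 6 + a ^ 4 / 3 + 2 * a ^ 3 - a ^ 2 / 2 - 2 * a) • h.map_zero ha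
  simp only [smul_eq_mul]
  ring_nf
  module

theorem map_two_smul (h : QuadFunEq a Q) (ha : a ^ 2 ≠ 1) (z : U) :
    Q ((2 : ℝ) • z) = (4 : ℝ) • Q z := by
  simpa using (h.comp (LinearMap.toSpanSingleton ℝ U z)).line_apply_two ha

theorem map_add_one_smul (h : QuadFunEq a Q) (ha : a ^ 2 ≠ 1) (z : U) :
    Q ((a + 1) • z) = (a + 1) ^ 2 • Q z := by
  have hzz := h z z
  rw [sub_self, h.map_zero ha, ← two_smul ℝ z, h.map_two_smul ha,
    show a • z + z = (a + 1) • z by module, show z + a • z = (a + 1) • z by module] at hzz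
  linear_combination (norm := module) (1 / 2 : ℝ) • hzz

theorem map_sub_one_smul (h : QuadFunEq a Q) (ha : a ^ 2 ≠ 1) (z : U) :
    Q ((a - 1) • z) = (a - 1) ^ 2 • Q z := by
  have ha₁ := (sq_ne_one_iff.1 ha).1
  have hzz := h z (-z)
  rw [add_neg_cancel, h.map_zero ha, sub_neg_eq_add, ← two_smul ℝ z, h.map_two_smul ha,
    h.map_neg ha₁, show a • z + -z = (a - 1) • z by module,
    show z + a • -z = -((a - 1) • z) by module, h.map_neg ha₁] at hzz
  linear_combination (norm := module) (1 / 2 : ℝ) • hzz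

theorem plane_parallelogram {f : ℝ × ℝ → V} (h : QuadFunEq a f) (ha : a ^ 2 ≠ 1) :
    f (1, 1) + f (1, -1) = (2 : ℝ) • f (1, 0) + (2 : ℝ) • f (0, 1) := by
  have ha₁ := (sq_ne_one_iff.1 ha).1
  refine smul_right_injective V (pow_ne_zero 3 (sub_ne_zero.2 ha)) ?_
  dsimp only
  linear_combination (norm := skip)
      (a ^ 8 / 6 - a ^ 7 / 2 + a ^ 6 / 2 + a ^ 5 / 6 - 5 * a ^ 4 / 2 + 7 * a ^ 3 / 6
        + 17 * a ^ 2 / 6 - 5 * a / 6 - 1) •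
        h.map_neg ha₁ (-1, -1) +
      (a ^ 8 / 4 + 2 * a ^ 6 / 3 + a ^ 5 / 3 - 17 * a ^ 4 / 6 - 2 * a ^ 3 / 3 + 8 * a ^ 2 / 3
        + a / 3 - 3 / 4) •
        h.map_neg ha₁ (-1, 1) +
      (-a ^ 9 / 3 + 2 * a ^ 8 / 3 - 2 * a ^ 6 + 2 * a ^ 5 + 8 * a ^ 4 / 3 - 8 * a ^ 3 / 3
        - 10 * a ^ 2 / 3 + a + 2) •
        h.map_neg ha₁ (-1, 0) +
      (-a ^ 7 / 3 - a ^ 6 / 6 - 4 * a ^ 5 / 3 - a ^ 4 / 6 - a ^ 3 / 3 + 5 * a ^ 2 / 6 + 2 * a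
        - 1 / 2) •
        h.map_two_smul ha (-1, 0) +
      (a ^ 6 / 12 + a ^ 4 / 4 - a ^ 3 / 3 + a ^ 2 / 4 - a + 3 / 4) •
        h.map_neg ha₁ (-a - 1, -a - 1) +
      (-a ^ 4 / 6 + a ^ 3 / 3 - 2 * a ^ 2 / 3 + a - 1 / 2) • h.map_add_one_smul ha (1, a) +
      (-a ^ 7 / 12 - a ^ 6 / 12 + a ^ 4 / 3 + a ^ 3 / 12 - a ^ 2 / 4) • h.map_neg ha₁ (-1, -a - 1) +
      (-a ^ 6 / 12 + a ^ 5 / 3 - 5 * a ^ 4 / 12 + 2 * a ^ 3 / 3 - a ^ 2 / 4 - a + 3 / 4) •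
        h.map_add_one_smul ha (-1, -1) +
      (-a ^ 7 / 6 - a ^ 5 / 6 + 5 * a ^ 3 / 6 - a / 2) • h.map_neg ha₁ (-1, -a) +
      (-a ^ 5 / 3 - 2 * a ^ 3 / 3 + a) • h (0, a) (a, -1) +
      (-a ^ 6 / 3 - 5 * a ^ 5 / 12 - 11 * a ^ 4 / 12 - a ^ 3 + a ^ 2 + 17 * a / 12 + 1 / 4) •
        h.map_neg ha₁ (-a, -a + 1) +
      (a ^ 5 / 3 + 2 * a ^ 3 / 3 - a) • h.map_neg ha₁ (-a, -a ^ 2 + 1) +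
      (-a ^ 7 / 3 - a ^ 5 / 3 + 5 * a ^ 3 / 3 - a) • h.map_neg ha₁ (-a, 1) +
      (a ^ 5 / 3 + 2 * a ^ 3 / 3 - a) • h.map_neg ha₁ (-a ^ 2, 0) +
      (a ^ 5 / 3 + 2 * a ^ 3 / 3 - a) • h.map_smul_self ha (-a, 0) +
      (a ^ 7 / 3 + 2 * a ^ 5 / 3 - a ^ 3) • h.map_smul_self ha (-1, 0) +
      (a ^ 5 / 3 + 2 * a ^ 3 / 3 - a) • h (0, 1) (-1, -a) +
      (a ^ 7 / 12 - a ^ 6 / 12 + a ^ 5 / 6 - a ^ 4 / 6 - 5 * a ^ 3 / 12 + 3 * a ^ 2 / 4 + a / 6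
        - 1 / 2) •
        h (0, 1) (-1, -1) +
      (-a ^ 7 / 3 - a ^ 5 / 3 + 5 * a ^ 3 / 3 - a) • h (0, 1) (-1, 0) +
      (-a ^ 6 / 6 + a ^ 5 / 6 + a ^ 4 / 3 + 2 * a ^ 3 / 3 + 5 * a ^ 2 / 6 - 5 * a / 6 - 1) •
        h.map_neg ha₁ (-1, a - 1) +
      (-a ^ 7 / 12 - 5 * a ^ 6 / 12 - a ^ 5 / 3 - a ^ 4 / 6 + 5 * a ^ 3 / 12 + 13 * a ^ 2 / 12
        - 1 / 2) •
        h.map_neg ha₁ (-1, -a + 1) +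
      (a ^ 5 / 6 + a ^ 4 / 6 - 2 * a ^ 2 / 3 - a / 6 + 1 / 2) • h.map_neg ha₁ (-1, a + 1) +
      (-a ^ 4 / 6 - a ^ 3 / 3 - 2 * a ^ 2 / 3 - a - 1 / 2) • h (1, 0) (-1, -a + 1) +
      (a ^ 4 / 6 + a ^ 3 / 3 + 2 * a ^ 2 / 3 + a + 1 / 2) • h.map_sub_one_smul ha (-1, -a) +
      (a ^ 6 / 12 + a ^ 4 / 12 - 5 * a ^ 2 / 12 + 1 / 4) • h.map_neg ha₁ (a - 1, -a + 1) +
      (-a ^ 6 / 12 - a ^ 4 / 12 + 5 * a ^ 2 / 12 - 1 / 4) • h.map_sub_one_smul ha (-1, 1) +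
      (-a ^ 6 / 12 + a ^ 5 / 3 - 5 * a ^ 4 / 12 + 2 * a ^ 3 / 3 - a ^ 2 / 4 - a + 3 / 4) •
        h.map_add_one_smul ha (-1, 1) +
      (-a ^ 4 / 6 + a ^ 3 / 3 - 2 * a ^ 2 / 3 + a - 1 / 2) • h.map_add_one_smul ha (-1, a) +
      (-a ^ 4 / 6 - a ^ 3 / 3 - 2 * a ^ 2 / 3 - a - 1 / 2) • h (1, 0) (-1, a - 1) +
      (a ^ 4 / 6 + a ^ 3 / 3 + 2 * a ^ 2 / 3 + a + 1 / 2) • h.map_sub_one_smul ha (-1, a) +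
      (-a ^ 4 / 6 - a ^ 3 / 3 - 2 * a ^ 2 / 3 - a - 1 / 2) • h.map_neg ha₁ (a - 1, a - 1) +
      (-a ^ 6 / 12 - a ^ 4 / 12 + 5 * a ^ 2 / 12 - 1 / 4) • h.map_sub_one_smul ha (-1, -1) +
      (-a ^ 5 / 12 - a ^ 4 / 12 + a ^ 2 / 3 + a / 12 - 1 / 4) • h (0, a) (-1, a) +
      (a ^ 5 / 12 + a ^ 4 / 12 - a ^ 2 / 3 - a / 12 + 1 / 4) • h.map_smul_self ha (-1, a + 1) +
      (-a ^ 5 / 12 - a ^ 4 / 4 - a ^ 3 / 3 + 5 * a / 12 + 1 / 4) • h (0, a) (1, -a) +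
      (-a ^ 7 / 6 - a ^ 5 / 2 + 3 * a ^ 3 / 2 - 5 * a / 6) • h.map_neg ha₁ (-1, a) +
      (a ^ 5 / 12 + a ^ 4 / 4 + a ^ 3 / 3 - 5 * a / 12 - 1 / 4) • h.map_neg ha₁ (-a, a ^ 2 - a) +
      (a ^ 5 / 12 + a ^ 4 / 4 + a ^ 3 / 3 - 5 * a / 12 - 1 / 4) • h.map_smul_self ha (-1, a - 1) +
      (a ^ 5 / 12 + a ^ 4 / 12 - a ^ 2 / 3 - a / 12 + 1 / 4) • h (1, 0) (0, -a - 1) +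
      (-a ^ 5 / 12 - a ^ 4 / 12 + a ^ 2 / 3 + a / 12 - 1 / 4) • h.map_neg ha₁ (-1, a ^ 2 + a) +
      (-a ^ 5 / 12 - a ^ 4 / 12 + a ^ 2 / 3 + a / 12 - 1 / 4) • h.map_neg ha₁ (-a, a + 1) +
      (a ^ 5 / 12 + a ^ 4 / 4 + a ^ 3 / 3 - 5 * a / 12 - 1 / 4) • h (1, 0) (0, a - 1) +
      (-a ^ 5 / 12 - a ^ 4 / 4 - a ^ 3 / 3 + 5 * a / 12 + 1 / 4) • h (0, a) (-1, -a) +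
      (a ^ 5 / 12 + a ^ 4 / 4 + a ^ 3 / 3 - 5 * a / 12 - 1 / 4) • h.map_smul_self ha (-1, -a + 1) +
      (a ^ 5 / 12 + a ^ 4 / 4 + a ^ 3 / 3 - 5 * a / 12 - 1 / 4) • h (1, 0) (0, -a + 1) +
      (-a ^ 5 / 12 - a ^ 4 / 4 - a ^ 3 / 3 + 5 * a / 12 + 1 / 4) • h.map_neg ha₁ (-1, a ^ 2 - a) +
      (a ^ 7 / 12 + a ^ 6 / 4 + a ^ 5 / 2 + a ^ 4 / 2 + a ^ 3 / 4 - a ^ 2 / 4 - 5 * a / 6 - 1 / 2) •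
        h (0, 1) (1, -1) +
      (a ^ 7 / 12 + a ^ 6 / 12 + a ^ 5 / 6 - a ^ 4 / 6 - a ^ 3 / 12 - 5 * a ^ 2 / 12 - a / 6
        + 1 / 2) •
        h (0, 1) (-1, 1) +
      (-a ^ 5 / 12 - a ^ 4 / 12 + a ^ 2 / 3 + a / 12 - 1 / 4) • h (0, a) (1, a) +
      (a ^ 5 / 12 + a ^ 4 / 12 - a ^ 2 / 3 - a / 12 + 1 / 4) • h.map_neg ha₁ (-a, -a ^ 2 - a) +
      (a ^ 5 / 12 + a ^ 4 / 12 - a ^ 2 / 3 - a / 12 + 1 / 4) • h.map_smul_self ha (-1, -a - 1) +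
      (a ^ 5 / 12 + a ^ 4 / 12 - a ^ 2 / 3 - a / 12 + 1 / 4) • h (1, 0) (0, a + 1) +
      (a ^ 7 / 12 - a ^ 6 / 4 + a ^ 5 / 2 - 5 * a ^ 4 / 6 + 7 * a ^ 3 / 12 + 7 * a ^ 2 / 12
        - 7 * a / 6 + 1 / 2) •
        h (0, 1) (1, 1) +
      (a ^ 7 / 6 - a ^ 6 / 2 + 2 * a ^ 5 / 3 + 2 * a ^ 4 - 13 * a ^ 3 / 6 + 9 * a ^ 2 / 2
        - 8 * a / 3 - 2) •
        h.map_add_one_smul ha (-1, 0) +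
      (-a ^ 5 / 12 - a ^ 4 / 12 - a ^ 3 / 3 - a / 4 + 3 / 4) • h (0, 1) (a + 1, -a) +
      (a ^ 7 / 12 - a ^ 6 / 4 + a ^ 5 / 3 + a ^ 4 - 13 * a ^ 3 / 12 + 9 * a ^ 2 / 4 - 4 * a / 3
        - 1) •
        h.map_neg ha₁ (-a - 1, 0) +
      (a ^ 5 / 12 + a ^ 4 / 12 + a ^ 3 / 3 + a / 4 - 3 / 4) •
        h.map_neg ha₁ (-a ^ 2 - a, a ^ 2 - 1) +
      (a ^ 5 / 12 + a ^ 4 / 12 + a ^ 3 / 3 + a / 4 - 3 / 4) • h.map_add_one_smul ha (-a, a - 1) +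
      (-a ^ 7 / 12 - a ^ 6 / 4 - 7 * a ^ 5 / 12 - 3 * a ^ 4 / 4 - 7 * a ^ 3 / 12 + a ^ 2 / 4
        + 5 * a / 4 + 3 / 4) •
        h.map_neg ha₁ (-a, a - 1) +
      (-a ^ 6 / 4 - a ^ 5 / 6 - 7 * a ^ 4 / 12 - a ^ 3 / 3 + 7 * a ^ 2 / 12 + a / 2 + 1 / 4) •
        h (1, 1) (1, -1) +
      (-a ^ 7 / 3 - a ^ 6 / 6 - 4 * a ^ 5 / 3 - a ^ 4 / 6 - a ^ 3 / 3 + 5 * a ^ 2 / 6 + 2 * a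
        - 1 / 2) •
        h.map_neg ha₁ (-2, 0) +
      (-a ^ 7 / 12 + a ^ 6 / 4 - a ^ 5 / 3 + 5 * a ^ 3 / 12 - a ^ 2 / 4) • h (1, 0) (1, 1) +
      (a ^ 5 / 12 - a ^ 4 / 4 + a ^ 3 / 3 - 5 * a / 12 + 1 / 4) • h (0, a) (a + 1, 0) +
      (-a ^ 5 / 12 + a ^ 4 / 4 - a ^ 3 / 3 + 5 * a / 12 - 1 / 4) • h.map_neg ha₁ (-a ^ 2 - a, -a) +
      (-a ^ 5 / 12 + a ^ 4 / 4 - a ^ 3 / 3 + 5 * a / 12 - 1 / 4) • h.map_smul_self ha (-a - 1, -1) +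
      (-a ^ 5 / 12 + a ^ 4 / 4 - a ^ 3 / 3 + 5 * a / 12 - 1 / 4) • h (1, 0) (1, a) +
      (-a ^ 6 / 6 + a ^ 5 / 6 + a ^ 2 / 6 - a / 6) • h.map_neg ha₁ (-a - 1, a) +
      (a ^ 7 / 12 - a ^ 6 / 4 + a ^ 5 / 3 - 5 * a ^ 3 / 12 + a ^ 2 / 4) •
        h.map_neg ha₁ (-a - 1, -1) +
      (a ^ 7 / 12 - a ^ 6 / 4 + a ^ 5 / 3 - 5 * a ^ 3 / 12 + a ^ 2 / 4) •
        h.map_neg ha₁ (-a - 1, 1) +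
      (a ^ 6 / 4 + a ^ 5 / 6 + 3 * a ^ 4 / 4 + a ^ 3 / 3 - a ^ 2 / 4 - a / 2 - 3 / 4) •
        h.map_neg ha₁ (-a - 1, -a + 1) +
      (-a ^ 5 / 12 - a ^ 4 / 12 - a ^ 3 / 3 - a / 4 + 3 / 4) • h (0, 1) (-a - 1, -a) +
      (a ^ 5 / 12 + a ^ 4 / 12 + a ^ 3 / 3 + a / 4 - 3 / 4) • h.map_add_one_smul ha (-a, -a + 1) +
      (a ^ 7 / 12 - a ^ 6 / 12 + a ^ 5 / 4 - a ^ 4 / 4 - a ^ 3 / 12 + a ^ 2 / 12 - a / 4 + 1 / 4) •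
        h.map_neg ha₁ (-a - 1, -a) +
      (a ^ 4 / 6 + a ^ 2 / 3 - 1 / 2) • h (0, a) (a + 1, -a) +
      (-a ^ 4 / 6 - a ^ 2 / 3 + 1 / 2) • h.map_neg ha₁ (-a ^ 2 - a, a ^ 2 - a) +
      (-a ^ 4 / 6 - a ^ 2 / 3 + 1 / 2) • h.map_smul_self ha (-a - 1, a - 1) +
      (-a ^ 4 / 6 - a ^ 2 / 3 + 1 / 2) • h (1, 0) (1, a - 1) +
      (a ^ 6 / 6 + a ^ 4 / 3 - a ^ 2 / 2) • h.map_neg ha₁ (-a - 1, a - 1) +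
      (a ^ 4 / 6 - a ^ 3 / 3 + 2 * a ^ 2 / 3 - a + 1 / 2) • h (0, a) (a + 1, a) +
      (-a ^ 4 / 6 + a ^ 3 / 3 - 2 * a ^ 2 / 3 + a - 1 / 2) •
        h.map_neg ha₁ (-a ^ 2 - a, -a ^ 2 - a) +
      (-a ^ 4 / 6 + a ^ 3 / 3 - 2 * a ^ 2 / 3 + a - 1 / 2) • h.map_smul_self ha (-a - 1, -a - 1) +
      (a ^ 4 / 6 - a ^ 3 / 3 + 2 * a ^ 2 / 3 - a + 1 / 2) • h (0, a) (-a - 1, a) +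
      (-a ^ 4 / 6 + a ^ 3 / 3 - 2 * a ^ 2 / 3 + a - 1 / 2) • h.map_smul_self ha (-a - 1, a + 1) +
      (a ^ 4 / 6 + a ^ 2 / 3 - 1 / 2) • h (0, a) (-a - 1, -a) +
      (-a ^ 4 / 6 - a ^ 2 / 3 + 1 / 2) • h.map_smul_self ha (-a - 1, -a + 1) +
      (-a ^ 4 / 6 - a ^ 2 / 3 + 1 / 2) • h (1, 0) (1, -a + 1) +
      (a ^ 4 / 6 + a ^ 2 / 3 - 1 / 2) • h.map_neg ha₁ (-a - 1, a ^ 2 - a) +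
      (a ^ 5 / 12 - a ^ 4 / 12 + a ^ 2 / 3 - a / 12 - 1 / 4) • h (0, a) (-a + 1, 0) +
      (a ^ 7 / 6 - a ^ 6 / 6 + 2 * a ^ 4 / 3 + a ^ 3 / 2 - 7 * a ^ 2 / 6 + 2 * a / 3 + 2) •
        h.map_sub_one_smul ha (-1, 0) +
      (-a ^ 5 / 12 + a ^ 4 / 12 - a ^ 2 / 3 + a / 12 + 1 / 4) • h.map_neg ha₁ (a ^ 2 - a, -a) +
      (-a ^ 5 / 12 + a ^ 4 / 12 - a ^ 2 / 3 + a / 12 + 1 / 4) • h.map_smul_self ha (a - 1, -1) +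
      (-a ^ 5 / 12 + a ^ 4 / 12 - a ^ 2 / 3 + a / 12 + 1 / 4) • h (1, 0) (-1, a) +
      (-a ^ 7 / 12 + a ^ 6 / 12 - a ^ 4 / 3 + a ^ 3 / 12 + a ^ 2 / 4) • h (1, 0) (-1, -1) +
      (-a ^ 5 / 4 + a ^ 4 / 4 - a ^ 2 + a / 4 + 3 / 4) • h.map_neg ha₁ (a - 1, a) +
      (a ^ 6 / 12 - a ^ 5 / 6 + 5 * a ^ 4 / 12 - a ^ 3 / 3 + a ^ 2 / 4 + a / 2 - 3 / 4) •
        h (1, 1) (-1, 1) +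
      (-a ^ 5 / 12 + a ^ 4 / 12 - a ^ 3 / 3 - a / 4 - 3 / 4) • h (0, 1) (-a + 1, -a) +
      (a ^ 5 / 12 - a ^ 4 / 12 + a ^ 3 / 3 + a / 4 + 3 / 4) • h.map_sub_one_smul ha (-a, -a - 1) +
      (-a ^ 7 / 12 + a ^ 6 / 4 - 7 * a ^ 5 / 12 + 3 * a ^ 4 / 4 - 7 * a ^ 3 / 12 - a ^ 2 / 4
        + 5 * a / 4 - 3 / 4) •
        h.map_neg ha₁ (-a, -a - 1) +
      (-a ^ 5 / 12 + a ^ 4 / 12 - a ^ 3 / 3 - a / 4 - 3 / 4) • h (0, 1) (a - 1, -a) +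
      (-a ^ 5 / 12 + a ^ 4 / 12 - a ^ 3 / 3 - a / 4 - 3 / 4) •
        h.map_neg ha₁ (a ^ 2 - a, -a ^ 2 + 1) +
      (a ^ 5 / 12 - a ^ 4 / 12 + a ^ 3 / 3 + a / 4 + 3 / 4) • h.map_sub_one_smul ha (-a, a + 1) +
      (-a ^ 7 / 12 + a ^ 6 / 12 - a ^ 4 / 3 - a ^ 3 / 4 + 7 * a ^ 2 / 12 - a / 3 - 1) •
        h.map_neg ha₁ (a - 1, 0) +
      (a ^ 7 / 12 - a ^ 6 / 12 + a ^ 5 / 6 + a ^ 4 / 6 - a ^ 3 / 12 + 5 * a ^ 2 / 12 - a / 6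
        - 1 / 2) •
        h.map_neg ha₁ (a - 1, -a) +
      (-a ^ 7 / 12 + a ^ 6 / 12 - a ^ 4 / 3 + a ^ 3 / 12 + a ^ 2 / 4) • h (1, 0) (-1, 1) +
      (a ^ 5 / 12 - a ^ 4 / 12 + a ^ 2 / 3 - a / 12 - 1 / 4) • h (0, a) (a - 1, 0) +
      (-a ^ 5 / 12 + a ^ 4 / 12 - a ^ 2 / 3 + a / 12 + 1 / 4) • h.map_smul_self ha (a - 1, 1) +
      (-a ^ 5 / 12 + a ^ 4 / 12 - a ^ 2 / 3 + a / 12 + 1 / 4) • h (1, 0) (-1, -a) +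
      (a ^ 5 / 12 - a ^ 4 / 12 + a ^ 2 / 3 - a / 12 - 1 / 4) • h.map_neg ha₁ (a - 1, a ^ 2) +
      (-a ^ 7 / 12 + a ^ 6 / 4 - a ^ 5 / 3 + 5 * a ^ 3 / 12 - a ^ 2 / 4) • h (1, 0) (1, -1) +
      (a ^ 5 / 12 - a ^ 4 / 4 + a ^ 3 / 3 - 5 * a / 12 + 1 / 4) • h (0, a) (-a - 1, 0) +
      (-a ^ 5 / 12 + a ^ 4 / 4 - a ^ 3 / 3 + 5 * a / 12 - 1 / 4) • h.map_smul_self ha (-a - 1, 1) +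
      (-a ^ 5 / 12 + a ^ 4 / 4 - a ^ 3 / 3 + 5 * a / 12 - 1 / 4) • h (1, 0) (1, -a) +
      (a ^ 5 / 12 - a ^ 4 / 4 + a ^ 3 / 3 - 5 * a / 12 + 1 / 4) • h.map_neg ha₁ (-a - 1, a ^ 2) +
      (a ^ 7 / 3 - a ^ 6 / 6 + 2 * a ^ 5 / 3 - a ^ 4 / 6 - a ^ 3 + 5 * a ^ 2 / 6 - 1 / 2) •
        h.map_neg ha₁ (0, -2) +
      (a ^ 7 / 12 + a ^ 6 / 12 - a ^ 5 / 12 - 5 * a ^ 4 / 12 - a ^ 3 / 12 + 7 * a ^ 2 / 12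
        + a / 12 - 1 / 4) •
        h.map_neg ha₁ (0, -a - 1) +
      (a ^ 7 / 6 + a ^ 6 / 2 + a ^ 5 / 2 - 11 * a ^ 4 / 6 - 17 * a ^ 3 / 6 - 9 * a ^ 2 / 2
        - 19 * a / 6 + 1 / 2) •
        h.map_sub_one_smul ha (0, -1) +
      (2 * a ^ 7 / 3 - 2 * a ^ 6 - a ^ 5 / 3 + 20 * a ^ 4 / 3 - 16 * a ^ 3 / 3 - 20 * a ^ 2 / 3
        + 5 * a + 2) •
        h.map_neg ha₁ (0, -1) +
      (-a ^ 7 / 3 - 2 * a ^ 6 / 3 - 4 * a ^ 5 / 3 + 14 * a ^ 4 / 3 - a ^ 3 / 3 - 4 * a ^ 2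
        + 2 * a) •
        h.map_neg ha₁ (0, -a) +
      (-a ^ 7 / 3 - 2 * a ^ 6 / 3 - 5 * a ^ 5 / 3 + 16 * a ^ 4 / 3 - a ^ 3 - 14 * a ^ 2 / 3
        + 3 * a) •
        h.map_smul_self ha (0, -1) +
      (-a ^ 7 / 12 - a ^ 6 / 4 - a ^ 5 / 4 + 11 * a ^ 4 / 12 + 17 * a ^ 3 / 12 + 9 * a ^ 2 / 4
        + 19 * a / 12 - 1 / 4) •
        h.map_neg ha₁ (0, a - 1) +
      (a ^ 7 / 6 + a ^ 6 / 6 - a ^ 5 / 6 - 5 * a ^ 4 / 6 - a ^ 3 / 6 + 7 * a ^ 2 / 6 + a / 6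
        - 1 / 2) •
        h.map_add_one_smul ha (0, -1) +
      (a ^ 7 / 3 - a ^ 6 / 6 + 2 * a ^ 5 / 3 - a ^ 4 / 6 - a ^ 3 + 5 * a ^ 2 / 6 - 1 / 2) •
        h.map_two_smul ha (0, -1)
  simp only [Prod.smul_mk, Prod.mk_add_mk, Prod.mk_sub_mk, Prod.neg_mk, smul_eq_mul]
  ring_nf
  module

theorem parallelogramLaw (h : QuadFunEq a Q) (ha : a ^ 2 ≠ 1) : ParallelogramLaw Q := by
  intro x y
  have := (h.comp ((LinearMap.fst ℝ ℝ ℝ).smulRight x +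
    (LinearMap.snd ℝ ℝ ℝ).smulRight y)).plane_parallelogram ha
  simpa [← sub_eq_add_neg] using this

end QuadFunEq

end

/-- For an integer `a` with `|a| ≠ 1`, a mapping `Q` between real vector
spaces satisfies `Q(ax+y) + Q(x+ay) + (a−1)Q(x−y) = (a+1)Q(x+y) + (a²−1)(Q(x)+Q(y))`
for all `x, y` iff `Q` is quadratic. -/
theorem stmt_2 {U V : Type*} [AddCommGroup U] [Module ℝ U] [AddCommGroup V] [Module ℝ V]
    (a : ℤ) (ha : |a| ≠ 1) (Q : U → V) :
    (∀ x y : U,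
      Q (a • x + y) + Q (x + a • y) + (a - 1) • Q (x - y)
        = (a + 1) • Q (x + y) + (a ^ 2 - 1) • (Q x + Q y)) ↔
    (∀ x y : U, Q (x + y) + Q (x - y) = (2 : ℕ) • Q x + (2 : ℕ) • Q y) := by
  have ha' : (a : ℝ) ^ 2 ≠ 1 := by
    have : a ^ 2 ≠ 1 := by rwa [sq_ne_one_iff, ← not_or, ← abs_eq zero_le_one]
    exact_mod_cast this
  have hE : (∀ x y : U, Q (a • x + y) + Q (x + a • y) + (a - 1) • Q (x - y)
      = (a + 1) • Q (x + y) + (a ^ 2 - 1) • (Q x + Q y)) ↔ QuadFunEq (a : ℝ) Q := by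
    simp only [QuadFunEq, ← Int.cast_smul_eq_zsmul ℝ, Int.cast_sub, Int.cast_add, Int.cast_pow,
      Int.cast_one]
  have hJ : (∀ x y : U, Q (x + y) + Q (x - y) = (2 : ℕ) • Q x + (2 : ℕ) • Q y) ↔
      ParallelogramLaw Q := by
    simp only [ParallelogramLaw, ← Nat.cast_smul_eq_nsmul ℝ, Nat.cast_ofNat]
  rw [hE, hJ]
  exact ⟨fun h => h.parallelogramLaw ha', fun h => h.quadFunEq a⟩
end

section
/- Let n ≥ 3 be an integer, let U and V be real vector spaces, and suppose Q : U → V satisfies equation (E_n). Then there exists a symmetric biadditive mapping B : U × U → V (B(x,y) = B(y,x), and B is additive in each variable) such that Q(x) = B(x,x) for all x ∈ U. -/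
open Finset

section

variable {U V : Type*} [AddCommGroup U] [AddCommGroup V] {Q : U → V}

/-- (E_n) at the zero-sum vector `(u, v, -(u + v), 0, …, 0)`, once `Q (n • z) = n ^ 2 • Q z`. -/
def SatisfiesZeroSumEq (Q : U → V) : Prop :=
  ∀ u v, Q (u - v) + Q (2 • u + v) + Q (u + 2 • v) = 3 • (Q u + Q v + Q (u + v))

theorem SatisfiesEn.map_zero_s4 [IsAddTorsionFree V] {n : ℕ} (hQ : SatisfiesEn n Q) (hn : 3 ≤ n) :
    Q 0 = 0 := by
  obtain ⟨c, hc⟩ : ∃ c, #(univ.filter fun p : Fin n × Fin n => p.1 < p.2) = c + 2 :=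
    Nat.exists_eq_add_of_le' <| one_lt_card.2 ⟨(⟨0, by omega⟩, ⟨1, by omega⟩), by simp,
      (⟨0, by omega⟩, ⟨2, by omega⟩), by simp, by simp⟩
  have h := hQ 0
  simp only [Pi.zero_apply, sub_zero, sum_const, smul_zero, card_univ, Fintype.card_fin, hc] at h
  have h' : (n * (c + 1)) • Q 0 = 0 := by
    linear_combination (norm := module) h
  exact (smul_eq_zero.1 h').resolve_left (by positivity)

theorem SatisfiesEn.append_zero {k m : ℕ} (hQ : SatisfiesEn (k + m) Q) (h0 : Q 0 = 0)
    (y : Fin k → U) :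
    (k + m) • (∑ p ∈ univ.filter (fun p : Fin k × Fin k => p.1 < p.2), Q (y p.1 - y p.2)
        + m • ∑ i, Q (y i)) =
      ∑ i, Q (∑ j, y j - (k + m) • y i) + m • Q (∑ j, y j) := by
  have hlt (i : Fin k) (j : Fin m) : Fin.castAdd m i < Fin.natAdd k j := by
    rw [Fin.lt_def, Fin.val_castAdd, Fin.val_natAdd]; omega
  have h := hQ (Fin.append y 0)
  simp only [sum_filter, ← univ_product_univ, sum_product, Fin.sum_univ_add, Fin.append_left,
    Fin.append_right, (Fin.strictMono_castAdd m).lt_iff_lt, Fin.natAdd_lt_natAdd_iff, hlt,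
    (hlt _ _).not_gt, if_true, if_false, Pi.zero_apply, sub_zero, sum_const_zero, add_zero,
    smul_zero, sum_const, card_univ, Fintype.card_fin, h0, ite_self] at h ⊢
  rwa [sum_add_distrib, ← smul_sum] at h

theorem SatisfiesEn.three_point {m : ℕ} (hQ : SatisfiesEn (3 + m) Q) (h0 : Q 0 = 0) (u v w : U) :
    (3 + m) • (Q (u - v) + Q (u - w) + Q (v - w) + m • (Q u + Q v + Q w)) =
      Q (u + v + w - (3 + m) • u) + Q (u + v + w - (3 + m) • v) + Q (u + v + w - (3 + m) • w)
        + m • Q (u + v + w) := by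
  have h := hQ.append_zero h0 ![u, v, w]
  simp only [sum_filter, ← univ_product_univ, sum_product, Fin.sum_univ_three] at h
  simpa [add_assoc] using h

theorem SatisfiesEn.four_point {m : ℕ} (hQ : SatisfiesEn (4 + m) Q) (h0 : Q 0 = 0) (u v w t : U) :
    (4 + m) • (Q (u - v) + Q (u - w) + Q (u - t) + Q (v - w) + Q (v - t) + Q (w - t)
        + m • (Q u + Q v + Q w + Q t)) =
      Q (u + v + w + t - (4 + m) • u) + Q (u + v + w + t - (4 + m) • v)
        + Q (u + v + w + t - (4 + m) • w) + Q (u + v + w + t - (4 + m) • t)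
        + m • Q (u + v + w + t) := by
  have h := hQ.append_zero h0 ![u, v, w, t]
  simp only [sum_filter, ← univ_product_univ, sum_product, Fin.sum_univ_four] at h
  simpa [add_assoc] using h

section
variable [IsAddTorsionFree V] {m : ℕ}

theorem SatisfiesEn.even (hQ : SatisfiesEn (3 + m) Q) (h0 : Q 0 = 0) : Function.Even Q := by
  intro z
  have h1 := hQ.three_point h0 z 0 0
  have h2 := hQ.three_point h0 0 0 z
  simp only [sub_zero, zero_sub, sub_self, h0, smul_zero, add_zero, zero_add] at h1 h2
  refine (nsmul_right_inj (n := 2 * (3 + m)) (by omega)).1 ?_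
  linear_combination (norm := module) h2 - h1

theorem SatisfiesEn.map_two_nsmul (hQ : SatisfiesEn (3 + m) Q) (h0 : Q 0 = 0) (z : U) :
    Q (2 • z) = 4 • Q z := by
  have heven := hQ.even h0
  rcases m with _ | m
  · have h := hQ.three_point h0 z 0 0
    simp only [sub_zero, sub_self, h0, smul_zero, add_zero] at h
    rw [show z - (3 + 0) • z = -(2 • z) by module, heven] at h
    linear_combination (norm := module) -h
  · have h3 := hQ.three_point h0 z (-z) 0
    rw [show 3 + (m + 1) = 4 + m by omega] at hQ h3
    have h4 := hQ.four_point h0 z (-z) z (-z)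
    simp only [sub_neg_eq_add, ← two_nsmul, sub_zero, sub_self, zero_sub, add_neg_cancel,
      ← neg_add', smul_neg, nsmul_zero, heven.eq, h0, add_zero, zero_add] at h3 h4
    refine (nsmul_right_inj (n := 2 * (4 + m)) (by omega)).1 ?_
    linear_combination (norm := module) h4 - 2 • h3

theorem SatisfiesEn.map_nsmul (hQ : SatisfiesEn (3 + m) Q) (h0 : Q 0 = 0) (z : U) :
    Q ((3 + m) • z) = (3 + m) ^ 2 • Q z := by
  have h := hQ.three_point h0 z (-z) 0
  simp only [sub_neg_eq_add, ← two_nsmul, sub_zero, zero_sub, add_neg_cancel, smul_neg,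
    nsmul_zero, hQ.map_two_nsmul h0, (hQ.even h0).eq, h0, add_zero, zero_add] at h
  refine (nsmul_right_inj two_ne_zero).1 ?_
  linear_combination (norm := module) -h

theorem SatisfiesEn.satisfiesZeroSumEq (hQ : SatisfiesEn (3 + m) Q) (h0 : Q 0 = 0) :
    SatisfiesZeroSumEq Q := fun u v => by
  have h := hQ.three_point h0 u v (-(u + v))
  rw [show u - -(u + v) = 2 • u + v by abel, show v - -(u + v) = u + 2 • v by abel,
    show u + v + -(u + v) = 0 by abel] at h
  simp only [zero_sub, smul_neg, neg_neg, (hQ.even h0).eq, hQ.map_nsmul h0, h0, smul_zero,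
    add_zero] at h
  refine (nsmul_right_inj (n := 3 + m) (by omega)).1 ?_
  linear_combination (norm := module) h

end

def parallelogramDefect (Q : U → V) (x y : U) : V := Q (x + y) + Q (x - y) - 2 • Q x - 2 • Q y

namespace SatisfiesZeroSumEq

theorem even (hN : SatisfiesZeroSumEq Q) : Function.Even Q := by
  intro z
  have h1 := hN 0 z
  have h2 := hN z 0
  simp only [zero_sub, sub_zero, smul_zero, zero_add, add_zero] at h1 h2
  linear_combination (norm := module) h1 - h2

theorem defect_comm (hN : SatisfiesZeroSumEq Q) (x y : U) :
    parallelogramDefect Q x y = parallelogramDefect Q y x := by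
  rw [parallelogramDefect, parallelogramDefect, add_comm y, ← hN.even.eq (y - x), neg_sub]
  abel

variable [IsAddTorsionFree V]

theorem map_zero_s4 (hN : SatisfiesZeroSumEq Q) : Q 0 = 0 := by
  have h := hN 0 0
  simp only [sub_zero, smul_zero, add_zero] at h
  refine (nsmul_right_inj (n := 6) (by norm_num)).1 ?_
  linear_combination (norm := module) -h

theorem map_two_nsmul (hN : SatisfiesZeroSumEq Q) (z : U) : Q (2 • z) = 4 • Q z := by
  have h := hN z (-z)
  rw [sub_neg_eq_add, ← two_nsmul, show 2 • z + -z = z by abel, show z + 2 • -z = -z by abel,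
    add_neg_cancel, hN.even.eq, hN.map_zero_s4] at h
  linear_combination (norm := module) h

theorem map_three_nsmul (hN : SatisfiesZeroSumEq Q) (z : U) : Q (3 • z) = 9 • Q z := by
  have h := hN z z
  rw [sub_self, hN.map_zero_s4, show 2 • z + z = 3 • z by abel, show z + 2 • z = 3 • z by abel,
    ← two_nsmul z, hN.map_two_nsmul] at h
  refine (nsmul_right_inj (n := 2) (by norm_num)).1 ?_
  linear_combination (norm := module) h

theorem defect_two_nsmul_two_nsmul (hN : SatisfiesZeroSumEq Q) (x y : U) :
    parallelogramDefect Q (2 • x) (2 • y) = 4 • parallelogramDefect Q x y := by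
  simp only [parallelogramDefect, ← nsmul_add, ← nsmul_sub, hN.map_two_nsmul]
  module

theorem defect_three_nsmul_left (hN : SatisfiesZeroSumEq Q) (x y : U) :
    parallelogramDefect Q (3 • x) y = 3 • parallelogramDefect Q x y := by
  have h := hN (x + y) (x - y)
  rw [show x + y - (x - y) = 2 • y by abel, show 2 • (x + y) + (x - y) = 3 • x + y by abel,
    show x + y + 2 • (x - y) = 3 • x - y by abel, show x + y + (x - y) = 2 • x by abel,
    hN.map_two_nsmul, hN.map_two_nsmul] at h
  simp only [parallelogramDefect, hN.map_three_nsmul]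
  linear_combination (norm := module) h

theorem defect_two_nsmul_left_add_right (hN : SatisfiesZeroSumEq Q) (x y : U) :
    parallelogramDefect Q (2 • x) y + parallelogramDefect Q x (2 • y)
      = 2 • parallelogramDefect Q x y := by
  have h1 := hN x y
  have h2 := hN x (-y)
  simp only [sub_neg_eq_add, smul_neg, ← sub_eq_add_neg, hN.even.eq] at h2
  simp only [parallelogramDefect, hN.map_two_nsmul]
  linear_combination (norm := module) h1 + h2

theorem defect_two_nsmul_right_eq_left (hN : SatisfiesZeroSumEq Q) (x y : U) :
    parallelogramDefect Q x (2 • y) = parallelogramDefect Q (2 • x) y := by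
  have h1 := hN (x + y) x
  have h2 := hN (x - y) x
  rw [add_sub_cancel_left, show 2 • (x + y) + x = 3 • x + 2 • y by abel,
    show x + y + 2 • x = 3 • x + y by abel, show x + y + x = 2 • x + y by abel] at h1
  rw [sub_sub_cancel_left, show 2 • (x - y) + x = 3 • x - 2 • y by abel,
    show x - y + 2 • x = 3 • x - y by abel, show x - y + x = 2 • x - y by abel, hN.even.eq] at h2
  have h3 := hN.defect_three_nsmul_left x y
  have h4 := hN.defect_three_nsmul_left x (2 • y)
  simp only [parallelogramDefect, hN.map_two_nsmul, hN.map_three_nsmul] at h3 h4 ⊢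
  refine (nsmul_right_inj (n := 3) (by norm_num)).1 ?_
  linear_combination (norm := module) h1 + h2 - h3 - h4

theorem defect_two_nsmul_left (hN : SatisfiesZeroSumEq Q) (x y : U) :
    parallelogramDefect Q (2 • x) y = parallelogramDefect Q x y := by
  refine (nsmul_right_inj (n := 2) (by norm_num)).1 ?_
  linear_combination (norm := module)
    hN.defect_two_nsmul_left_add_right x y - hN.defect_two_nsmul_right_eq_left x y

theorem defect_eq_zero (hN : SatisfiesZeroSumEq Q) (x y : U) : parallelogramDefect Q x y = 0 := by
  have h : parallelogramDefect Q (2 • x) (2 • y) = parallelogramDefect Q x y := by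
    rw [hN.defect_two_nsmul_left, hN.defect_comm, hN.defect_two_nsmul_left, hN.defect_comm]
  rw [hN.defect_two_nsmul_two_nsmul] at h
  refine (nsmul_right_inj (n := 3) (by norm_num)).1 ?_
  linear_combination (norm := module) h

theorem parallelogram (hN : SatisfiesZeroSumEq Q) (x y : U) :
    Q (x + y) + Q (x - y) = 2 • Q x + 2 • Q y := by
  have h := hN.defect_eq_zero x y
  rw [parallelogramDefect, sub_sub, sub_eq_zero] at h
  exact h

end SatisfiesZeroSumEq

theorem polarization_add_left [IsAddTorsionFree V] (heven : Function.Even Q)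
    (hP : ∀ x y, Q (x + y) + Q (x - y) = 2 • Q x + 2 • Q y) (x y z : U) :
    Q (x + y + z) - Q (x + y - z) = (Q (x + z) - Q (x - z)) + (Q (y + z) - Q (y - z)) := by
  have h1 := hP (x + z) y
  have h2 := hP (x - z) y
  have h3 := hP (y + z) x
  have h4 := hP (y - z) x
  rw [show x + z + y = x + y + z by abel, show x + z - y = x - y + z by abel] at h1
  rw [show x - z + y = x + y - z by abel, show x - z - y = x - y - z by abel] at h2
  rw [show y + z + x = x + y + z by abel, show y + z - x = -(x - y - z) by abel, heven.eq] at h3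
  rw [show y - z + x = x + y - z by abel, show y - z - x = -(x - y + z) by abel, heven.eq] at h4
  refine (nsmul_right_inj (n := 2) (by norm_num)).1 ?_
  linear_combination (norm := module) h1 - h2 + h3 - h4

theorem exists_symm_biadditive_of_parallelogram (K : Type*) [DivisionRing K] [CharZero K]
    [Module K V] (hP : ∀ x y, Q (x + y) + Q (x - y) = 2 • Q x + 2 • Q y) :
    ∃ B : U → U → V,
      (∀ x y, B x y = B y x) ∧
      (∀ x y z, B (x + y) z = B x z + B y z) ∧
      (∀ x y z, B x (y + z) = B x y + B x z) ∧
      (∀ x, Q x = B x x) := by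
  have : IsAddTorsionFree V := .of_isTorsionFree K V
  have h0 : Q 0 = 0 := by
    have h := hP 0 0
    rw [add_zero, sub_zero] at h
    refine (nsmul_right_inj (n := 2) (by norm_num)).1 ?_
    linear_combination (norm := module) -h
  have heven : Function.Even Q := fun y => by
    have h := hP 0 y
    rw [zero_add, zero_sub, h0, smul_zero, zero_add] at h
    linear_combination (norm := module) h
  set B : U → U → V := fun x y => (4 : K)⁻¹ • (Q (x + y) - Q (x - y))
  have hcomm (x y : U) : B x y = B y x := by
    simp only [B, add_comm x, ← neg_sub y x, heven.eq]
  have hadd (x y z : U) : B (x + y) z = B x z + B y z := by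
    simp only [B, polarization_add_left heven hP, smul_add]
  refine ⟨B, hcomm, hadd, fun x y z => ?_, fun x => ?_⟩
  · rw [hcomm, hadd, hcomm y, hcomm z]
  · have h := hP x x
    rw [sub_self, h0, add_zero, ← add_nsmul] at h
    simp only [B, sub_self, h0, sub_zero, h]
    rw [← Nat.cast_smul_eq_nsmul K, smul_smul]
    norm_num

end

theorem stmt_4_general {U V : Type*} [AddCommGroup U] [AddCommGroup V] [Module ℝ V]
    (n : ℕ) (hn : 3 ≤ n) (Q : U → V) (hQ : SatisfiesEn n Q) :
    ∃ B : U → U → V,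
      (∀ x y : U, B x y = B y x) ∧
      (∀ x y z : U, B (x + y) z = B x z + B y z) ∧
      (∀ x y z : U, B x (y + z) = B x y + B x z) ∧
      (∀ x : U, Q x = B x x) := by
  have : IsAddTorsionFree V := .of_isTorsionFree ℝ V
  obtain ⟨m, rfl⟩ := Nat.exists_eq_add_of_le hn
  have hN : SatisfiesZeroSumEq Q := hQ.satisfiesZeroSumEq (hQ.map_zero_s4 hn)
  exact exists_symm_biadditive_of_parallelogram ℝ hN.parallelogram

/-- If `Q` between real vector spaces satisfies equation (E_n) for an
integer `n ≥ 3`, then there is a symmetric biadditive `B` with `Q(x) = B(x,x)`. -/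
theorem stmt_4 {U V : Type*} [AddCommGroup U] [Module ℝ U] [AddCommGroup V] [Module ℝ V]
    (n : ℕ) (hn : 3 ≤ n) (Q : U → V) (hQ : SatisfiesEn n Q) :
    ∃ B : U → U → V,
      (∀ x y : U, B x y = B y x) ∧
      (∀ x y z : U, B (x + y) z = B x z + B y z) ∧
      (∀ x y z : U, B x (y + z) = B x y + B x z) ∧
      (∀ x : U, Q x = B x x) :=
  stmt_4_general n hn Q hQ
end

section
/- Let U and V be real vector spaces. A mapping Q : U → V satisfies Q(2x+y) + Q(2x−y) = Q(x+y) + Q(x−y) + 6Q(x) for all x, y ∈ U if and only if Q is quadratic, i.e. Q(x+y) + Q(x−y) = 2Q(x) + 2Q(y) for all x, y ∈ U. -/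
/-!
From the parallelogram law, `x = y = 0` gives `2 Q 0 = 0`, hence `Q` is even, and adding the law at
`(x + y, x)`, `(x - y, x)` and `(x, y)` gives the doubled equation. Conversely, specialising the
doubled equation at `y = 0`, `y = x` and `y = 2x` yields `Q (2x) = 4 Q x`, `Q 0 = 0`,
`Q (3x) = 9 Q x` and evenness of `Q`; then its instances at `(x, 2y)` and `(y, x)` add up to three
times the parallelogram law.
-/

section

variable {U V : Type*} [AddCommGroup U] [AddCommGroup V]

def IsQuadratic (Q : U → V) : Prop :=
  ∀ x y : U, Q (x + y) + Q (x - y) = (2 : ℕ) • Q x + (2 : ℕ) • Q y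

def IsDoubledQuadratic (Q : U → V) : Prop :=
  ∀ x y : U, Q ((2 : ℕ) • x + y) + Q ((2 : ℕ) • x - y) = Q (x + y) + Q (x - y) + (6 : ℕ) • Q x

variable {Q : U → V}

namespace IsQuadratic

theorem two_nsmul_map_zero (hQ : IsQuadratic Q) : 2 • Q 0 = 0 := by
  have e := hQ 0 0
  rw [add_zero, sub_zero] at e
  linear_combination (norm := module) -e

theorem map_neg (hQ : IsQuadratic Q) (x : U) : Q (-x) = Q x := by
  have e := hQ 0 x
  rw [zero_add, zero_sub] at e
  linear_combination (norm := module) e + hQ.two_nsmul_map_zero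

theorem isDoubledQuadratic (hQ : IsQuadratic Q) : IsDoubledQuadratic Q := by
  intro x y
  have e₁ := hQ (x + y) x
  have e₂ := hQ (x - y) x
  rw [show x + y + x = 2 • x + y by abel, add_sub_cancel_left] at e₁
  rw [show x - y + x = 2 • x - y by abel, sub_sub_cancel_left] at e₂
  linear_combination (norm := module) e₁ + e₂ + hQ x y - hQ.map_neg y

end IsQuadratic

namespace IsDoubledQuadratic

variable [IsAddTorsionFree V]

theorem map_two_nsmul (hQ : IsDoubledQuadratic Q) (x : U) : Q (2 • x) = 4 • Q x := by
  have e := hQ x 0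
  rw [add_zero, sub_zero, add_zero, sub_zero] at e
  refine nsmul_right_injective two_ne_zero ?_
  linear_combination (norm := module) e

theorem map_zero (hQ : IsDoubledQuadratic Q) : Q 0 = 0 := by
  have e := hQ.map_two_nsmul 0
  rw [nsmul_zero] at e
  refine nsmul_right_injective (three_ne_zero (α := ℕ)) ?_
  linear_combination (norm := module) -e

theorem map_three_nsmul (hQ : IsDoubledQuadratic Q) (x : U) : Q (3 • x) = 9 • Q x := by
  have e := hQ x x
  rw [← succ_nsmul, show 2 • x - x = x by abel, ← two_nsmul, sub_self, hQ.map_two_nsmul,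
    hQ.map_zero] at e
  linear_combination (norm := module) e

theorem map_neg (hQ : IsDoubledQuadratic Q) (x : U) : Q (-x) = Q x := by
  have e := hQ x (2 • x)
  rw [← add_nsmul, show 2 • x - 2 • x = 0 by abel, show x + 2 • x = 3 • x by abel,
    show x - 2 • x = -x by abel, show (2 + 2) • x = 2 • 2 • x by abel, hQ.map_two_nsmul,
    hQ.map_two_nsmul, hQ.map_three_nsmul, hQ.map_zero] at e
  linear_combination (norm := module) -e

theorem isQuadratic (hQ : IsDoubledQuadratic Q) : IsQuadratic Q := by
  intro x y
  have e₁ := hQ x (2 • y)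
  have e₂ := hQ y x
  rw [← nsmul_add, ← nsmul_sub, hQ.map_two_nsmul, hQ.map_two_nsmul, add_comm x (2 • y),
    show x - 2 • y = -(2 • y - x) by abel, hQ.map_neg] at e₁
  rw [add_comm y, ← neg_sub x y, hQ.map_neg] at e₂
  refine nsmul_right_injective (three_ne_zero (α := ℕ)) ?_
  linear_combination (norm := module) e₁ + e₂

end IsDoubledQuadratic

theorem isDoubledQuadratic_iff_isQuadratic [IsAddTorsionFree V] :
    IsDoubledQuadratic Q ↔ IsQuadratic Q :=
  ⟨IsDoubledQuadratic.isQuadratic, IsQuadratic.isDoubledQuadratic⟩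

end

theorem stmt_18_general {U V : Type*} [AddCommGroup U] [AddCommGroup V] [Module ℝ V]
    (Q : U → V) :
    (∀ x y : U,
      Q ((2 : ℕ) • x + y) + Q ((2 : ℕ) • x - y) = Q (x + y) + Q (x - y) + (6 : ℕ) • Q x) ↔
    (∀ x y : U, Q (x + y) + Q (x - y) = (2 : ℕ) • Q x + (2 : ℕ) • Q y) :=
  have := IsAddTorsionFree.of_isTorsionFree ℝ V
  isDoubledQuadratic_iff_isQuadratic

/-- A mapping `Q` between real vector spaces satisfies
`Q(2x+y) + Q(2x−y) = Q(x+y) + Q(x−y) + 6Q(x)` for all `x, y` iff `Q` is quadratic. -/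
theorem stmt_18 {U V : Type*} [AddCommGroup U] [Module ℝ U] [AddCommGroup V] [Module ℝ V]
    (Q : U → V) :
    (∀ x y : U,
      Q ((2 : ℕ) • x + y) + Q ((2 : ℕ) • x - y) = Q (x + y) + Q (x - y) + (6 : ℕ) • Q x) ↔
    (∀ x y : U, Q (x + y) + Q (x - y) = (2 : ℕ) • Q x + (2 : ℕ) • Q y) :=
  stmt_18_general Q
end
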